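/- arXiv:2212.04797 — 3 statements merged into one kernel-verified Lean document; each statement's English description precedes it below -/
import Mathlib

section
/- For commuting positive semidefinite matrices Σ₁, …, Σ_K, the matrix Σ̄ with Σ̄^{1/2} = K^{-1}(Σ₁^{1/2} + … + Σ_K^{1/2}) satisfies the Fréchet-mean fixed-point identity: the sum over j of (Σ̄^{1/2} Σ_j Σ̄^{1/2})^{1/2} equals K·Σ̄. -/
/-!
Since the `Σⱼ` commute, so do their square roots `Sⱼ`, and hence `A = K⁻¹ ∑ Sⱼ` commutes with
every `Sⱼ`. A product of commuting nonnegative operators is nonnegative, so `A Sⱼ` is a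
nonnegative square root of `(A Sⱼ)² = A Σⱼ A`; by uniqueness of square roots `Qⱼ = A Sⱼ`, and
`∑ⱼ A Sⱼ = A (K A) = K Σ̄`.
-/

open scoped MatrixOrder

section

variable {A : Type*} [PartialOrder A] [NonUnitalRing A] [TopologicalSpace A] [StarRing A]
  [Module ℝ A] [SMulCommClass ℝ A A] [IsScalarTower ℝ A A] [StarOrderedRing A]
  [NonUnitalContinuousFunctionalCalculus ℝ A IsSelfAdjoint] [NonnegSpectrumClass ℝ A]
  [IsTopologicalRing A] [T2Space A]

theorem Commute.of_mul_self_right {a b : A} (hb : 0 ≤ b) (h : Commute a (b * b)) :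
    Commute a b := by
  rw [← CFC.sqrt_mul_self b]
  exact (h.symm.cfcₙ_nnreal _).symm

theorem CFC.sqrt_mul_mul_self_mul {a b : A} (ha : 0 ≤ a) (hb : 0 ≤ b) (hab : Commute a b) :
    CFC.sqrt (a * (b * b) * a) = a * b := by
  have hsq : (a * b) * (a * b) = a * (b * b) * a := by
    simp only [mul_assoc]
    rw [hab.eq]
  rw [← hsq, CFC.sqrt_mul_self (a * b) (hab.mul_nonneg ha hb)]

end

theorem stmt5_general {n K : ℕ} (hK : 0 < K)
    (Sig : Fin K → Matrix (Fin n) (Fin n) ℝ)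
    (hcomm : ∀ i j, Sig i * Sig j = Sig j * Sig i)
    (S : Fin K → Matrix (Fin n) (Fin n) ℝ)
    (hS : ∀ j, (S j).PosSemidef) (hSsq : ∀ j, S j * S j = Sig j)
    (A SigBar : Matrix (Fin n) (Fin n) ℝ)
    (hA : A = (K : ℝ)⁻¹ • ∑ j, S j) (hSigBar : SigBar = A * A)
    (Q : Fin K → Matrix (Fin n) (Fin n) ℝ)
    (hQ : ∀ j, (Q j).PosSemidef) (hQsq : ∀ j, Q j * Q j = A * Sig j * A) :
    ∑ j, Q j = (K : ℝ) • SigBar := by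
  have hS_nonneg : ∀ j, 0 ≤ S j := fun j => (hS j).nonneg
  have hS_comm : ∀ i j, Commute (S i) (S j) := fun i j =>
    have hsq : Commute (S i * S i) (S j * S j) := by rw [hSsq, hSsq]; exact hcomm i j
    ((hsq.of_mul_self_right (hS_nonneg j)).symm.of_mul_self_right (hS_nonneg i)).symm
  have hA_nonneg : 0 ≤ A :=
    hA ▸ smul_nonneg (by positivity) (Finset.sum_nonneg fun j _ => hS_nonneg j)
  have hA_comm : ∀ j, Commute A (S j) := fun j =>
    hA ▸ (Commute.sum_left _ _ _ fun i _ => hS_comm i j).smul_left _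
  have hQ_eq : ∀ j, Q j = A * S j := fun j => by
    rw [← CFC.sqrt_mul_self (Q j) (hQ j).nonneg, hQsq, ← hSsq,
      CFC.sqrt_mul_mul_self_mul hA_nonneg (hS_nonneg j) (hA_comm j)]
  have hsum : ∑ j, S j = (K : ℝ) • A := by
    rw [hA, smul_smul, mul_inv_cancel₀ (by positivity), one_smul]
  calc ∑ j, Q j = A * ∑ j, S j := by simp only [hQ_eq, Finset.mul_sum]
    _ = (K : ℝ) • SigBar := by rw [hsum, mul_smul_comm, hSigBar]

/-- For pairwise commuting positive semidefinite matrices `Σ₁, …, Σ_K`, the matrix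
`Σ̄` with `Σ̄^{1/2} = K⁻¹ ∑ⱼ Σⱼ^{1/2}` satisfies the Fréchet-mean fixed point identity
`∑ⱼ (Σ̄^{1/2} Σⱼ Σ̄^{1/2})^{1/2} = K · Σ̄`. -/
theorem stmt5 {n K : ℕ} (hK : 0 < K)
    (Sig : Fin K → Matrix (Fin n) (Fin n) ℝ)
    (hSig : ∀ j, (Sig j).PosSemidef)
    (hcomm : ∀ i j, Sig i * Sig j = Sig j * Sig i)
    (S : Fin K → Matrix (Fin n) (Fin n) ℝ)
    (hS : ∀ j, (S j).PosSemidef) (hSsq : ∀ j, S j * S j = Sig j)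
    (A SigBar : Matrix (Fin n) (Fin n) ℝ)
    (hA : A = (K : ℝ)⁻¹ • ∑ j, S j) (hSigBar : SigBar = A * A)
    (Q : Fin K → Matrix (Fin n) (Fin n) ℝ)
    (hQ : ∀ j, (Q j).PosSemidef) (hQsq : ∀ j, Q j * Q j = A * Sig j * A) :
    ∑ j, Q j = (K : ℝ) • SigBar :=
  stmt5_general hK Sig hcomm S hS hSsq A SigBar hA hSigBar Q hQ hQsq
end

section
/- Under the assumptions of the Fréchet-mean fixed-point equation, each transport map has operator norm at most K: if Q_j = (Σ̄^{1/2} Σ_j Σ̄^{1/2})^{1/2} satisfies Q_j ≤ ∑_{i=1}^K Q_i = K·Σ̄ in the Loewner order and Σ̄ is positive definite, then t_j = Σ̄^{-1/2} Q_j Σ̄^{-1/2} satisfies ‖t_j‖_∞ ≤ K. -/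
open scoped Matrix.Norms.L2Operator

open scoped MatrixOrder

theorem norm_le_of_nonneg_of_le_algebraMap {A : Type*} [NormedRing A] [StarRing A]
    [NormedAlgebra ℝ A] [PartialOrder A] [StarOrderedRing A] [NonnegSpectrumClass ℝ A]
    [IsometricContinuousFunctionalCalculus ℝ A IsSelfAdjoint] {a : A} {c : ℝ} (hc : 0 ≤ c)
    (ha : 0 ≤ a) (hac : a ≤ algebraMap ℝ A c) : ‖a‖ ≤ c := by
  have hsa : IsSelfAdjoint a := .of_nonneg ha
  rw [← cfc_id ℝ a]
  refine norm_cfc_le hc fun x hx => ?_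
  rw [id, Real.norm_eq_abs, abs_le]
  exact ⟨by linarith [spectrum_nonneg_of_nonneg ha hx],
    (le_algebraMap_iff_spectrum_le hsa).1 hac x hx⟩

theorem Matrix.norm_inv_mul_mul_inv_le {n : Type*} [Fintype n] [DecidableEq n]
    {S Q : Matrix n n ℝ} {c : ℝ} (hc : 0 ≤ c) (hS : S.IsHermitian) (hSunit : IsUnit S)
    (hQ : 0 ≤ Q) (hQc : Q ≤ c • (S * S)) : ‖S⁻¹ * Q * S⁻¹‖ ≤ c := by
  have hSinv : star S⁻¹ = S⁻¹ := by
    rw [Matrix.star_eq_conjTranspose, Matrix.conjTranspose_nonsing_inv, hS.eq]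
  have hconj : S⁻¹ * (c • (S * S)) * S⁻¹ = algebraMap ℝ (Matrix n n ℝ) c := by
    have hdet := (Matrix.isUnit_iff_isUnit_det S).1 hSunit
    rw [Algebra.algebraMap_eq_smul_one, Matrix.mul_smul, Matrix.smul_mul, ← Matrix.mul_assoc,
      Matrix.nonsing_inv_mul S hdet, Matrix.one_mul, Matrix.mul_nonsing_inv S hdet]
  refine norm_le_of_nonneg_of_le_algebraMap hc ?_ ?_
  · simpa only [hSinv] using star_left_conjugate_nonneg hQ S⁻¹
  · simpa only [hSinv, hconj] using star_left_conjugate_le_conjugate hQc S⁻¹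

theorem stmt7_general {n K : ℕ}
    (SigBar : Matrix (Fin n) (Fin n) ℝ) (hSigBar : SigBar.PosDef)
    (S : Matrix (Fin n) (Fin n) ℝ) (hS : S.PosSemidef) (hSsq : S * S = SigBar)
    (Q : Fin K → Matrix (Fin n) (Fin n) ℝ)
    (hQ : ∀ i, (Q i).PosSemidef)
    (j : Fin K) (hLoewner : ((K : ℝ) • SigBar - Q j).PosSemidef)
    (t : Matrix (Fin n) (Fin n) ℝ) (ht : t = S⁻¹ * Q j * S⁻¹) :
    ‖t‖ ≤ (K : ℝ) := by
  subst ht hSsq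
  have hSunit : IsUnit S := isUnit_of_mul_isUnit_left hSigBar.isUnit
  exact Matrix.norm_inv_mul_mul_inv_le K.cast_nonneg hS.isHermitian hSunit (hQ j).nonneg
    (Matrix.le_iff.2 hLoewner)

/-- If `Qⱼ = (Σ̄^{1/2} Σⱼ Σ̄^{1/2})^{1/2}` satisfies `Qⱼ ≤ ∑ᵢ Qᵢ = K·Σ̄` in the Loewner
order and `Σ̄` is positive definite, then the transport map `tⱼ = Σ̄^{-1/2} Qⱼ Σ̄^{-1/2}`
has operator (spectral) norm at most `K`. -/
theorem stmt7 {n K : ℕ} (hK : 0 < K)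
    (Sig : Fin K → Matrix (Fin n) (Fin n) ℝ) (hSig : ∀ i, (Sig i).PosDef)
    (SigBar : Matrix (Fin n) (Fin n) ℝ) (hSigBar : SigBar.PosDef)
    (S : Matrix (Fin n) (Fin n) ℝ) (hS : S.PosSemidef) (hSsq : S * S = SigBar)
    (Q : Fin K → Matrix (Fin n) (Fin n) ℝ)
    (hQ : ∀ i, (Q i).PosSemidef) (hQsq : ∀ i, Q i * Q i = S * Sig i * S)
    (hfix : ∑ i, Q i = (K : ℝ) • SigBar)
    (j : Fin K) (hLoewner : ((K : ℝ) • SigBar - Q j).PosSemidef)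
    (t : Matrix (Fin n) (Fin n) ℝ) (ht : t = S⁻¹ * Q j * S⁻¹) :
    ‖t‖ ≤ (K : ℝ) :=
  stmt7_general SigBar hSigBar S hS hSsq Q hQ j hLoewner t ht
end

section
/- For positive definite Σ and any unitary U, the Procrustes infimum is attained within the bound: ‖Σ₁^{1/2} − Σ₂^{1/2}U‖_2² ≥ tr Σ₁ + tr Σ₂ − 2 tr((Σ₁^{1/2} Σ₂ Σ₁^{1/2})^{1/2}) for all orthogonal matrices U and positive semidefinite Σ₁, Σ₂. -/
/-!
Expanding the square reduces the bound to `tr (Mᵀ U) ≤ tr Q` for `M = Σ₂^{1/2} Σ₁^{1/2}`, where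
`Q = (Mᵀ M)^{1/2}`. In an orthonormal eigenbasis of `Q` the columns of `M` have lengths equal to
the eigenvalues of `Q` and those of `U` have length one, so Cauchy–Schwarz column by column
bounds each diagonal entry of `Mᵀ U` by the corresponding eigenvalue.
-/

open Matrix

namespace Matrix

variable {m n : Type*} [Fintype m] [Fintype n]

theorem trace_transpose_sub_mul_sub {R : Type*} [CommRing R] (A B : Matrix m n R) :
    ((A - B)ᵀ * (A - B)).trace = (Aᵀ * A).trace + (Bᵀ * B).trace - 2 * (Aᵀ * B).trace := by
  have hBA : (Bᵀ * A).trace = (Aᵀ * B).trace := by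
    rw [← trace_transpose, transpose_mul, transpose_transpose]
  rw [transpose_sub, Matrix.sub_mul, Matrix.mul_sub, Matrix.mul_sub, trace_sub, trace_sub,
    trace_sub, hBA]
  ring

theorem IsHermitian.exists_orthogonal_transpose_mul_mul_eq_diagonal [DecidableEq n]
    {A : Matrix n n ℝ} (hA : A.IsHermitian) :
    ∃ E : Matrix n n ℝ, Eᵀ * E = 1 ∧ E * Eᵀ = 1 ∧ Eᵀ * A * E = diagonal hA.eigenvalues := by
  have hdiag := hA.conjStarAlgAut_star_eigenvectorUnitary
  simp only [Unitary.conjStarAlgAut_star_apply, RCLike.ofReal_real_eq_id, Function.id_comp] at hdiag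
  exact ⟨_, (mem_unitaryGroup_iff').mp hA.eigenvectorUnitary.2,
    (mem_unitaryGroup_iff).mp hA.eigenvectorUnitary.2, hdiag⟩

theorem trace_transpose_mul_le_sum_sqrt (P R : Matrix m n ℝ) :
    (Pᵀ * R).trace ≤ ∑ i, √((Pᵀ * P) i i) * √((Rᵀ * R) i i) := by
  simp only [trace, diag, mul_apply, transpose_apply, ← pow_two]
  exact Finset.sum_le_sum fun i _ ↦ Real.sum_mul_le_sqrt_mul_sqrt _ _ _

theorem PosSemidef.trace_transpose_mul_le_trace [DecidableEq n] {M U : Matrix m n ℝ}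
    {Q : Matrix n n ℝ} (hQ : Q.PosSemidef) (hQM : Q * Q = Mᵀ * M) (hU : Uᵀ * U = 1) :
    (Mᵀ * U).trace ≤ Q.trace := by
  obtain ⟨E, hEE, hEE', hD⟩ := hQ.isHermitian.exists_orthogonal_transpose_mul_mul_eq_diagonal
  set d := hQ.isHermitian.eigenvalues
  have hM : (M * E)ᵀ * (M * E) = diagonal fun i ↦ d i ^ 2 := by
    calc (M * E)ᵀ * (M * E) = (Eᵀ * Q * E) * (Eᵀ * Q * E) := by
          rw [transpose_mul, Matrix.mul_assoc, ← Matrix.mul_assoc Mᵀ, ← hQM]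
          simp only [Matrix.mul_assoc, ← Matrix.mul_assoc E Eᵀ, hEE', Matrix.one_mul]
      _ = diagonal fun i ↦ d i ^ 2 := by rw [hD, diagonal_mul_diagonal]; simp only [sq]
  have hUE : (U * E)ᵀ * (U * E) = 1 := by
    rw [transpose_mul, Matrix.mul_assoc, ← Matrix.mul_assoc Uᵀ, hU, Matrix.one_mul, hEE]
  calc (Mᵀ * U).trace = (Eᵀ * (Mᵀ * U) * E).trace := by
        rw [trace_mul_comm _ E, ← Matrix.mul_assoc, hEE', Matrix.one_mul]
    _ = ((M * E)ᵀ * (U * E)).trace := by simp only [transpose_mul, Matrix.mul_assoc]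
    _ ≤ ∑ i, √(((M * E)ᵀ * (M * E)) i i) * √(((U * E)ᵀ * (U * E)) i i) :=
        trace_transpose_mul_le_sum_sqrt _ _
    _ = ∑ i, d i := by
        simp only [hM, hUE, diagonal_apply_eq, one_apply_eq, Real.sqrt_one, mul_one]
        exact Finset.sum_congr rfl fun i _ ↦ Real.sqrt_sq (hQ.eigenvalues_nonneg i)
    _ = Q.trace := by simp [hQ.isHermitian.trace_eq_sum_eigenvalues, d]

end Matrix

theorem stmt11_general {n : ℕ} (Sig1 Sig2 : Matrix (Fin n) (Fin n) ℝ)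
    (S1 : Matrix (Fin n) (Fin n) ℝ) (hS1 : S1.PosSemidef) (hS1sq : S1 * S1 = Sig1)
    (S2 : Matrix (Fin n) (Fin n) ℝ) (hS2 : S2.PosSemidef) (hS2sq : S2 * S2 = Sig2)
    (Q : Matrix (Fin n) (Fin n) ℝ) (hQ : Q.PosSemidef) (hQsq : Q * Q = S1 * Sig2 * S1)
    (U : Matrix (Fin n) (Fin n) ℝ) (hU : Uᵀ * U = 1) :
    Sig1.trace + Sig2.trace - 2 * Q.trace ≤ ((S1 - S2 * U)ᵀ * (S1 - S2 * U)).trace := by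
  have hS1t : S1ᵀ = S1 := hS1.isHermitian
  have hS2t : S2ᵀ = S2 := hS2.isHermitian
  have hSig2 : ((S2 * U)ᵀ * (S2 * U)).trace = Sig2.trace := by
    rw [transpose_mul, trace_mul_comm, Matrix.mul_assoc, ← Matrix.mul_assoc U,
      mul_eq_one_comm.mp hU, Matrix.one_mul, hS2t, hS2sq]
  have hcross : S1ᵀ * (S2 * U) = (S2 * S1)ᵀ * U := by
    rw [transpose_mul, hS1t, hS2t, Matrix.mul_assoc]
  have hQM : Q * Q = (S2 * S1)ᵀ * (S2 * S1) := by
    rw [hQsq, transpose_mul, hS1t, hS2t, ← hS2sq]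
    simp only [Matrix.mul_assoc]
  rw [trace_transpose_sub_mul_sub, hSig2, hcross, hS1t, hS1sq]
  linarith [hQ.trace_transpose_mul_le_trace hQM hU]

/-- For positive semidefinite `Σ₁, Σ₂` and any orthogonal matrix `U`,
`‖Σ₁^{1/2} − Σ₂^{1/2} U‖₂² ≥ tr Σ₁ + tr Σ₂ − 2 tr((Σ₁^{1/2} Σ₂ Σ₁^{1/2})^{1/2})`. -/
theorem stmt11 {n : ℕ} (Sig1 Sig2 : Matrix (Fin n) (Fin n) ℝ)
    (hSig1 : Sig1.PosSemidef) (hSig2 : Sig2.PosSemidef)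
    (S1 : Matrix (Fin n) (Fin n) ℝ) (hS1 : S1.PosSemidef) (hS1sq : S1 * S1 = Sig1)
    (S2 : Matrix (Fin n) (Fin n) ℝ) (hS2 : S2.PosSemidef) (hS2sq : S2 * S2 = Sig2)
    (Q : Matrix (Fin n) (Fin n) ℝ) (hQ : Q.PosSemidef) (hQsq : Q * Q = S1 * Sig2 * S1)
    (U : Matrix (Fin n) (Fin n) ℝ) (hU : Uᵀ * U = 1) :
    Sig1.trace + Sig2.trace - 2 * Q.trace ≤ ((S1 - S2 * U)ᵀ * (S1 - S2 * U)).trace :=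
  stmt11_general Sig1 Sig2 S1 hS1 hS1sq S2 hS2 hS2sq Q hQ hQsq U hU
end
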